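/- (Validity of ⊗-introduction) For all finite multisets Γ, Δ of IMLL formulas and all IMLL formulas φ, ψ: if Γ ⊩ φ and Δ ⊩ ψ, then Γ ⨾ Δ ⊩ φ ⊗ ψ. -/
import Mathlib


/-- Formulas of intuitionistic multiplicative linear logic over a
countably infinite set of atoms (here: `ℕ`). -/
inductive MForm : Type where
  | atom : ℕ → MForm
  | tensor : MForm → MForm → MForm
  | unit : MForm
  | limp : MForm → MForm → MForm
deriving DecidableEq

/-- An atomic rule `(P₁ ▷ p₁, …, Pₙ ▷ pₙ) ⇒ p`: a (possibly empty) finite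
set of atomic sequents together with a conclusion atom. -/
structure MRule : Type where
  prems : Finset (Multiset ℕ × ℕ)
  concl : ℕ

/-- A base is a set of atomic rules. -/
abbrev MBase := Set MRule

/-- Derivability in a base `B`: `P ⊢_B p`. -/
inductive MDer (B : MBase) : Multiset ℕ → ℕ → Prop where
  | ref (p : ℕ) : MDer B {p} p
  | app {r : MRule} (hr : r ∈ B) (S : Multiset ℕ × ℕ → Multiset ℕ)
      (h : ∀ pr ∈ r.prems, MDer B (S pr + pr.1) pr.2) :
      MDer B (r.prems.sum S) r.concl

/-- The resource-indexed support relation `⊩_B^P φ`. -/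
def MSupp : MForm → MBase → Multiset ℕ → Prop
  | .atom p, B, P => MDer B P p
  | .tensor φ ψ, B, P => ∀ X : MBase, B ⊆ X → ∀ U : Multiset ℕ, ∀ p : ℕ,
      (∀ Y : MBase, X ⊆ Y → ∀ V : Multiset ℕ,
        (∃ V₁ V₂ : Multiset ℕ, V = V₁ + V₂ ∧ MSupp φ Y V₁ ∧ MSupp ψ Y V₂) →
        MDer Y (U + V) p) →
      MDer X (P + U) p
  | .unit, B, P => ∀ X : MBase, B ⊆ X → ∀ U : Multiset ℕ, ∀ p : ℕ,
      MDer X U p → MDer X (P + U) p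
  | .limp φ ψ, B, P => ∀ X : MBase, B ⊆ X → ∀ U : Multiset ℕ,
      MSupp φ X U → MSupp ψ X (P + U)

/-- Support of a multiset of formulas: `⊩_B^P Γ`, obtained by splitting
the resources `P` among the members of `Γ`. -/
inductive MSuppCtx (B : MBase) : Multiset ℕ → Multiset MForm → Prop where
  | nil : MSuppCtx B 0 0
  | cons {P Q : Multiset ℕ} {φ : MForm} {Γ : Multiset MForm} :
      MSupp φ B P → MSuppCtx B Q Γ → MSuppCtx B (P + Q) (φ ::ₘ Γ)

/-- Support of a sequent: `Γ ⊩_B^P φ` (clause (Inf)). -/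
def MSuppInf (Γ : Multiset MForm) (B : MBase) (P : Multiset ℕ) (φ : MForm) : Prop :=
  ∀ X : MBase, B ⊆ X → ∀ U : Multiset ℕ, MSuppCtx X U Γ → MSupp φ X (P + U)

/-- Validity: `Γ ⊩ φ` iff `Γ ⊩_B^∅ φ` for every base `B`. -/
def MValid (Γ : Multiset MForm) (φ : MForm) : Prop :=
  ∀ B : MBase, MSuppInf Γ B 0 φ

/-- The natural deduction system NIMLL: `Γ ⊢ φ`. -/
inductive NIMLL : Multiset MForm → MForm → Prop where
  | ax (φ : MForm) : NIMLL {φ} φ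
  | limpI {Γ : Multiset MForm} {φ ψ : MForm} :
      NIMLL (φ ::ₘ Γ) ψ → NIMLL Γ (.limp φ ψ)
  | limpE {Γ Δ : Multiset MForm} {φ ψ : MForm} :
      NIMLL Γ (.limp φ ψ) → NIMLL Δ φ → NIMLL (Γ + Δ) ψ
  | unitI : NIMLL 0 .unit
  | unitE {Γ Δ : Multiset MForm} {φ : MForm} :
      NIMLL Γ φ → NIMLL Δ .unit → NIMLL (Γ + Δ) φ
  | tensorI {Γ Δ : Multiset MForm} {φ ψ : MForm} :
      NIMLL Γ φ → NIMLL Δ ψ → NIMLL (Γ + Δ) (.tensor φ ψ)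
  | tensorE {Γ Δ : Multiset MForm} {φ ψ χ : MForm} :
      NIMLL Γ (.tensor φ ψ) → NIMLL (φ ::ₘ ψ ::ₘ Δ) χ → NIMLL (Γ + Δ) χ

lemma mder_mono {B X : MBase} (hBX : B ⊆ X) {P : Multiset ℕ} {p : ℕ}
    (h : MDer B P p) : MDer X P p := by
  induction h with
  | ref q => exact MDer.ref q
  | app hr S h ih => exact MDer.app (hBX hr) S ih

lemma msupp_mono (φ : MForm) {B X : MBase} (hBX : B ⊆ X) {P : Multiset ℕ}
    (h : MSupp φ B P) : MSupp φ X P := by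
  cases φ with
  | atom p => exact mder_mono hBX h
  | tensor φ ψ => exact fun Y hXY U p hp => h Y (hBX.trans hXY) U p hp
  | unit => exact fun Y hXY U p hp => h Y (hBX.trans hXY) U p hp
  | limp φ ψ => exact fun Y hXY U hp => h Y (hBX.trans hXY) U hp

lemma msuppctx_split {X : MBase} {U : Multiset ℕ} {Θ : Multiset MForm}
    (h : MSuppCtx X U Θ) : ∀ Γ Δ : Multiset MForm, Θ = Γ + Δ →
    ∃ U₁ U₂ : Multiset ℕ, U = U₁ + U₂ ∧ MSuppCtx X U₁ Γ ∧ MSuppCtx X U₂ Δ := by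
  induction h with
  | nil =>
    intro Γ Δ hΘ
    obtain ⟨hΓ, hΔ⟩ : Γ = 0 ∧ Δ = 0 := by
      constructor <;>
        (rw [Multiset.eq_zero_iff_forall_notMem]; intro a ha;
         have : a ∈ Γ + Δ := Multiset.mem_add.mpr (by tauto);
         rw [← hΘ] at this; simp at this)
    exact ⟨0, 0, by simp, hΓ ▸ MSuppCtx.nil, hΔ ▸ MSuppCtx.nil⟩
  | @cons P Q φ Γ₀ hφ hctx ih =>
    intro Γ Δ hΘ
    have hmem : φ ∈ Γ + Δ := by rw [← hΘ]; exact Multiset.mem_cons_self _ _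
    rcases Multiset.mem_add.mp hmem with hm | hm
    · obtain ⟨Γ', rfl⟩ := Multiset.exists_cons_of_mem hm
      have hΓ₀ : Γ₀ = Γ' + Δ := by
        have h' : φ ::ₘ Γ₀ = φ ::ₘ (Γ' + Δ) := by rw [hΘ, Multiset.cons_add]
        exact (Multiset.cons_inj_right φ).mp h' 
      obtain ⟨U₁, U₂, hU, h1, h2⟩ := ih Γ' Δ hΓ₀
      exact ⟨P + U₁, U₂, by rw [hU, add_assoc], MSuppCtx.cons hφ h1, h2⟩
    · obtain ⟨Δ', rfl⟩ := Multiset.exists_cons_of_mem hm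
      have hΓ₀ : Γ₀ = Γ + Δ' := by
        have h' : φ ::ₘ Γ₀ = φ ::ₘ (Γ + Δ') := by rw [hΘ, Multiset.add_cons]
        exact (Multiset.cons_inj_right φ).mp h' 
      obtain ⟨U₁, U₂, hU, h1, h2⟩ := ih Γ Δ' hΓ₀
      refine ⟨U₁, P + U₂, ?_, h1, MSuppCtx.cons hφ h2⟩
      rw [hU]
      exact (add_left_comm P U₁ U₂)

/-- (Validity of ⊗-introduction) If `Γ ⊩ φ` and `Δ ⊩ ψ`, then
`Γ ⨾ Δ ⊩ φ ⊗ ψ`. -/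
theorem imll_tensor_intro_valid (Γ Δ : Multiset MForm) (φ ψ : MForm)
    (h1 : MValid Γ φ) (h2 : MValid Δ ψ) :
    MValid (Γ + Δ) (.tensor φ ψ) := by
  intro B X hBX U hctx
  obtain ⟨U₁, U₂, rfl, hΓ, hΔ⟩ := msuppctx_split hctx Γ Δ rfl
  have hφ : MSupp φ X U₁ := by simpa using h1 B X hBX U₁ hΓ
  have hψ : MSupp ψ X U₂ := by simpa using h2 B X hBX U₂ hΔ
  intro Y hXY V p hp
  have := hp Y (Set.Subset.refl Y) (U₁ + U₂)
    ⟨U₁, U₂, rfl, msupp_mono φ hXY hφ, msupp_mono ψ hXY hψ⟩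
  have heq : 0 + (U₁ + U₂) + V = V + (U₁ + U₂) := by
    simp [add_comm]
  rw [heq]
  exact this
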